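/- Let Db be a database, A a set of attributes, and define the database projection π_A and the concept-collection projection π_A (via least elements of A-equivalence classes). Then Concepts(π_A(Db)) = π_A(Concepts(Db)), where Concepts(·) denotes the set of all formal concepts of a database. -/

import Mathlib

variable {α β : Type*} [DecidableEq α] [DecidableEq β]

/-- `(X, Y)` is a 1-rectangle of the database `(Db, AA, OO)`. -/
def IsRect (Db : α → β → Prop) (AA : Finset α) (OO : Finset β)
    (X : Finset α) (Y : Finset β) : Prop :=
  X ⊆ AA ∧ Y ⊆ OO ∧ ∀ a ∈ X, ∀ o ∈ Y, Db a o

def IsConcept (Db : α → β → Prop) (AA : Finset α) (OO : Finset β)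
    (X : Finset α) (Y : Finset β) : Prop :=
  IsRect Db AA OO X Y ∧
    ∀ X' Y', IsRect Db AA OO X' Y' → X ⊆ X' → Y ⊆ Y' → X = X' ∧ Y = Y'

/-- The set of least elements of the `A`-equivalence classes of the concepts
of `Db`. -/
def LEA (Db : α → β → Prop) (AA : Finset α) (OO : Finset β) (A : Finset α) :
    Set (Finset α × Finset β) :=
  {C | IsConcept Db AA OO C.1 C.2 ∧
    ∀ X' Y', IsConcept Db AA OO X' Y' → X' ∩ A = C.1 ∩ A → C.1 ⊆ X' ∧ Y' ⊆ C.2}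

/-- Projection of a collection of concepts of `Db` on the attribute set `A`. -/
def projColl (Db : α → β → Prop) (AA : Finset α) (OO : Finset β) (A : Finset α)
    (C : Set (Finset α × Finset β)) : Set (Finset α × Finset β) :=
  (fun c : Finset α × Finset β => (c.1 ∩ A, c.2)) '' (C ∩ LEA Db AA OO A)

/-
Concepts are the fixed points of the Galois connection between common attributes and common
objects: `X = commonAttrs Y` and `Y = commonObjs X`. Restricting the database to `A ⊆ AA` replaces
`commonAttrs Y` by `commonAttrs Y ∩ A`. Hence a concept `(X, Y)` of the projection lifts to the
concept `(commonAttrs Y, Y)`, which is the least one of its `A`-class because `commonAttrs` is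
antitone. Conversely, if `(X, Y)` is least in its class, the concept generated by `X ∩ A` lies in
the same class, so leastness forces `commonObjs (X ∩ A) ⊆ Y`, which is exactly what `(X ∩ A, Y)`
lacks to be a concept of the projection.
-/

section Derivation

omit [DecidableEq α] [DecidableEq β]

variable (Db : α → β → Prop) (AA : Finset α) (OO : Finset β)

open Classical in
noncomputable def commonAttrs (Y : Finset β) : Finset α :=
  AA.filter fun a => ∀ o ∈ Y, Db a o

open Classical in
noncomputable def commonObjs (X : Finset α) : Finset β :=
  OO.filter fun o => ∀ a ∈ X, Db a o

variable {Db AA OO} {X : Finset α} {Y : Finset β}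

theorem mem_commonAttrs {a : α} : a ∈ commonAttrs Db AA Y ↔ a ∈ AA ∧ ∀ o ∈ Y, Db a o := by
  classical
  simp [commonAttrs]

theorem mem_commonObjs {o : β} : o ∈ commonObjs Db OO X ↔ o ∈ OO ∧ ∀ a ∈ X, Db a o := by
  classical
  simp [commonObjs]

theorem commonAttrs_anti : Antitone (commonAttrs Db AA) := fun _ _ hY _ ha =>
  mem_commonAttrs.2 ⟨(mem_commonAttrs.1 ha).1, fun o ho => (mem_commonAttrs.1 ha).2 o (hY ho)⟩

theorem commonObjs_anti : Antitone (commonObjs Db OO) := fun _ _ hX _ ho =>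
  mem_commonObjs.2 ⟨(mem_commonObjs.1 ho).1, fun a ha => (mem_commonObjs.1 ho).2 a (hX ha)⟩

theorem commonObjs_subset : commonObjs Db OO X ⊆ OO := fun _ ho => (mem_commonObjs.1 ho).1

theorem isRect_iff_subset_commonAttrs :
    IsRect Db AA OO X Y ↔ X ⊆ commonAttrs Db AA Y ∧ Y ⊆ OO := by
  simp only [IsRect, Finset.subset_iff, mem_commonAttrs]
  grind

theorem isRect_iff_subset_commonObjs :
    IsRect Db AA OO X Y ↔ X ⊆ AA ∧ Y ⊆ commonObjs Db OO X := by
  simp only [IsRect, Finset.subset_iff, mem_commonObjs]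
  grind

theorem subset_commonAttrs_commonObjs (hX : X ⊆ AA) :
    X ⊆ commonAttrs Db AA (commonObjs Db OO X) :=
  (isRect_iff_subset_commonAttrs.1 (isRect_iff_subset_commonObjs.2 ⟨hX, subset_rfl⟩)).1

theorem subset_commonObjs_commonAttrs (hY : Y ⊆ OO) :
    Y ⊆ commonObjs Db OO (commonAttrs Db AA Y) :=
  (isRect_iff_subset_commonObjs.1 (isRect_iff_subset_commonAttrs.2 ⟨subset_rfl, hY⟩)).2

theorem isConcept_iff :
    IsConcept Db AA OO X Y ↔ X = commonAttrs Db AA Y ∧ Y = commonObjs Db OO X := by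
  constructor
  · rintro ⟨hrect, hmax⟩
    obtain ⟨hXY, hY⟩ := isRect_iff_subset_commonAttrs.1 hrect
    obtain ⟨hX, hYX⟩ := isRect_iff_subset_commonObjs.1 hrect
    exact ⟨(hmax _ _ (isRect_iff_subset_commonAttrs.2 ⟨subset_rfl, hY⟩) hXY subset_rfl).1,
      (hmax _ _ (isRect_iff_subset_commonObjs.2 ⟨hX, subset_rfl⟩) subset_rfl hYX).2⟩
  · rintro ⟨hX, hY⟩
    refine ⟨isRect_iff_subset_commonAttrs.2 ⟨hX.le, hY ▸ commonObjs_subset⟩,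
      fun X' Y' hrect' hXX' hYY' => ⟨hXX'.antisymm ?_, hYY'.antisymm ?_⟩⟩
    · calc X' ⊆ commonAttrs Db AA Y' := (isRect_iff_subset_commonAttrs.1 hrect').1
        _ ⊆ commonAttrs Db AA Y := commonAttrs_anti hYY'
        _ = X := hX.symm
    · calc Y' ⊆ commonObjs Db OO X' := (isRect_iff_subset_commonObjs.1 hrect').2
        _ ⊆ commonObjs Db OO X := commonObjs_anti hXX'
        _ = Y := hY.symm

theorem isConcept_commonAttrs_commonObjs (hX : X ⊆ AA) :
    IsConcept Db AA OO (commonAttrs Db AA (commonObjs Db OO X)) (commonObjs Db OO X) :=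
  isConcept_iff.2 ⟨rfl, (subset_commonObjs_commonAttrs commonObjs_subset).antisymm
    (commonObjs_anti (subset_commonAttrs_commonObjs hX))⟩

end Derivation

section Projection

omit [DecidableEq β]

variable {Db : α → β → Prop} {AA : Finset α} {OO : Finset β} {A : Finset α} {X : Finset α}
  {Y : Finset β}

theorem commonAttrs_of_subset (hA : A ⊆ AA) :
    commonAttrs Db A Y = commonAttrs Db AA Y ∩ A := by
  ext a
  simp only [Finset.mem_inter, mem_commonAttrs]
  grind

theorem isConcept_restrict_iff (hA : A ⊆ AA) :
    IsConcept Db A OO X Y ↔ X = commonAttrs Db AA Y ∩ A ∧ Y = commonObjs Db OO X := by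
  rw [isConcept_iff, commonAttrs_of_subset hA]

theorem isConcept_commonAttrs_of_isConcept_restrict (hA : A ⊆ AA)
    (h : IsConcept Db A OO X Y) : IsConcept Db AA OO (commonAttrs Db AA Y) Y := by
  obtain ⟨hX, hY⟩ := (isConcept_restrict_iff hA).1 h
  refine isConcept_iff.2 ⟨rfl, (subset_commonObjs_commonAttrs (hY ▸ commonObjs_subset)).antisymm ?_⟩
  calc commonObjs Db OO (commonAttrs Db AA Y) ⊆ commonObjs Db OO X :=
        commonObjs_anti (hX ▸ Finset.inter_subset_left)
    _ = Y := hY.symm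

theorem commonAttrs_mem_LEA_of_isConcept_restrict (hA : A ⊆ AA)
    (h : IsConcept Db A OO X Y) : (commonAttrs Db AA Y, Y) ∈ LEA Db AA OO A := by
  obtain ⟨hX, hY⟩ := (isConcept_restrict_iff hA).1 h
  refine ⟨isConcept_commonAttrs_of_isConcept_restrict hA h, fun X' Y' h' hclass => ?_⟩
  obtain ⟨hX', hY'⟩ := isConcept_iff.1 h'
  have hY'Y : Y' ⊆ Y := calc
    Y' = commonObjs Db OO X' := hY'
    _ ⊆ commonObjs Db OO (X' ∩ A) := commonObjs_anti Finset.inter_subset_left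
    _ = Y := by rw [hclass, ← hX, ← hY]
  exact ⟨hX' ▸ commonAttrs_anti hY'Y, hY'Y⟩

theorem isConcept_restrict_of_mem_LEA (hA : A ⊆ AA) (h : (X, Y) ∈ LEA Db AA OO A) :
    IsConcept Db A OO (X ∩ A) Y := by
  obtain ⟨hconcept, hleast⟩ := h
  obtain ⟨hX, hY⟩ : X = commonAttrs Db AA Y ∧ Y = commonObjs Db OO X := isConcept_iff.1 hconcept
  have hXA : X ∩ A ⊆ AA := Finset.inter_subset_left.trans hconcept.1.1
  have hYZ : Y ⊆ commonObjs Db OO (X ∩ A) :=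
    hY.trans_subset (commonObjs_anti Finset.inter_subset_left)
  refine (isConcept_restrict_iff hA).2 ⟨by rw [← hX], hYZ.antisymm ?_⟩
  have hclass : commonAttrs Db AA (commonObjs Db OO (X ∩ A)) ∩ A = X ∩ A :=
    (Finset.inter_subset_inter_right ((commonAttrs_anti hYZ).trans hX.symm.subset)).antisymm
      (Finset.subset_inter (subset_commonAttrs_commonObjs hXA) Finset.inter_subset_right)
  exact (hleast _ _ (isConcept_commonAttrs_commonObjs hXA) hclass).2

end Projection

/-- `Concepts(π_A(Db)) = π_A(Concepts(Db))`: the concepts of the projected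
database are the projection of the collection of concepts of `Db`. -/
theorem concepts_proj_db_eq_proj_concepts (Db : α → β → Prop)
    (AA : Finset α) (OO : Finset β) (A : Finset α) (hA : A ⊆ AA) :
    {C : Finset α × Finset β | IsConcept Db A OO C.1 C.2} =
      projColl Db AA OO A {C : Finset α × Finset β | IsConcept Db AA OO C.1 C.2} := by
  ext ⟨X, Y⟩
  constructor
  · intro h
    have hX : commonAttrs Db AA Y ∩ A = X := ((isConcept_restrict_iff hA).1 h).1.symm
    exact ⟨(commonAttrs Db AA Y, Y), ⟨isConcept_commonAttrs_of_isConcept_restrict hA h,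
      commonAttrs_mem_LEA_of_isConcept_restrict hA h⟩, Prod.ext hX rfl⟩
  · rintro ⟨⟨X', Y'⟩, ⟨-, hleast⟩, hproj⟩
    obtain ⟨rfl, rfl⟩ := Prod.mk.inj hproj
    exact isConcept_restrict_of_mem_LEA hA hleast
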